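/- arXiv:1203.3034 — 5 statements merged into one kernel-verified Lean document; each statement's English description precedes it below -/
import Mathlib

section
/- Let (M,g) be a Sasakian 3-manifold (∇_X ξ = 𝔛X, (∇_X 𝔛)Y = η(Y)X − g(X,Y)ξ) isometrically immersed as a hypersurface in a Riemannian 4-manifold with shape operator E satisfying ∇_X ξ = 𝔛(EX) for all X. Then E ξ = f ξ for some real function f, and EX = X + (f−1) η(X) ξ for all X. -/
/-- a Sasakian 3-manifold (`∇_X ξ = 𝔛X`) immersed as a hypersurface with
symmetric shape operator `E` satisfying `∇_X ξ = 𝔛(EX)` has `Eξ = f ξ` for some function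
`f`, and `EX = X + (f−1) η(X) ξ` for all `X`.  (Algebraic model: `A` = functions, `V` =
vector fields.) -/
theorem stmt_5
    {A : Type*} [CommRing A] [Algebra ℝ A]
    {V : Type*} [AddCommGroup V] [Module A V]
    (g : V →ₗ[A] V →ₗ[A] A)
    (nabla : V → V → V)
    (Xm : V →ₗ[A] V) (ξ : V) (η : V →ₗ[A] A)
    -- almost contact metric structure
    (hgsym : ∀ X Y : V, g X Y = g Y X)
    (hXm2 : ∀ X : V, Xm (Xm X) = -X + η X • ξ)
    (hgξ : g ξ ξ = 1)
    (hXmξ : Xm ξ = 0)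
    (hη : ∀ X : V, η X = g ξ X)
    (hcomp : ∀ X Y : V, g (Xm X) (Xm Y) = g X Y - η X * η Y)
    -- Sasakian condition and the Weingarten-type condition for the shape operator
    (E : V → V)
    (hEsym : ∀ X Y : V, g (E X) Y = g X (E Y))
    (hSasaki : ∀ X : V, nabla X ξ = Xm X)
    (hshape : ∀ X : V, nabla X ξ = Xm (E X)) :
    ∃ f : A, E ξ = f • ξ ∧ ∀ X : V, E X = X + ((f - 1) * η X) • ξ := by
  have key : ∀ X : V, E X = X + (g ξ (E X) - η X) • ξ := by
    intro X
    have h1 : Xm (E X) = Xm X := (hshape X).symm.trans (hSasaki X)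
    have h2 := congrArg Xm h1
    rw [hXm2, hXm2] at h2
    have h3 : E X = X + (η (E X) - η X) • ξ := by
      linear_combination (norm := module) -h2
    rw [hη (E X)] at h3
    exact h3
  have hkξ := key ξ
  rw [hη ξ, hgξ] at hkξ
  have hEξ : E ξ = g ξ (E ξ) • ξ := by
    calc E ξ = ξ + (g ξ (E ξ) - 1) • ξ := hkξ
    _ = g ξ (E ξ) • ξ := by module
  refine ⟨g ξ (E ξ), hEξ, ?_⟩
  intro X
  have hf : g ξ (E X) = g ξ (E ξ) * η X := by
    rw [← hEsym ξ X]
    conv_lhs => rw [hEξ]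
    simp [smul_eq_mul, hgξ, ← hη X]
  rw [key X, hf, sub_mul, one_mul]
end

section
/- On a Sasakian 3-manifold immersed in the complex space form M_ℂ²(c) of constant holomorphic sectional curvature 4c (c ≠ 0), with shape operator E satisfying the Codazzi equation d^∇E(X,Y) = c(η(X)𝔛Y − η(Y)𝔛X − 2g(𝔛X,Y)ξ) and E = Id + (f−1)η(·)ξ, one has f = 1 − c; hence EX = X − c η(X)ξ and the mean curvature H = (1/3) tr E equals (3−c)/3, which is constant. -/
/-!
Evaluate the Codazzi equation at `(e₁, ξ)`. Since `Eξ = fξ`, `∇_{e₁}ξ = 𝔛e₁` and `E` fixes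
horizontal vectors, the left-hand side is `(f - 1)𝔛e₁` modulo `ξ`, while the right-hand side is
`-c𝔛e₁` modulo `ξ`. Pairing with the unit vector `𝔛e₁ ⊥ ξ` gives `f - 1 = -c`.
-/

def extCovDeriv {V : Type*} [AddCommGroup V] (nabla : V → V → V) (E : V → V) (X Y : V) : V :=
  (nabla X (E Y) - E (nabla X Y)) - (nabla Y (E X) - E (nabla Y X))

namespace AlmostContact

variable {A V : Type*} [CommRing A] [AddCommGroup V] [Module A V]
  {φ : V →ₗ[A] V} {ξ : V} {η : V →ₗ[A] A}

/-- Expanding `φ³X` in two ways gives `η(φX) ξ = 0`. -/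
theorem eta_apply_phi (hηξ : η ξ = 1) (hφξ : φ ξ = 0)
    (hφ2 : ∀ X : V, φ (φ X) = -X + η X • ξ) (X : V) : η (φ X) = 0 := by
  have hcube : φ (φ (φ X)) = -φ X + η (φ X) • ξ := hφ2 (φ X)
  rw [hφ2 X, map_add, map_neg, map_smul, hφξ, smul_zero, add_zero, left_eq_add] at hcube
  simpa [hηξ] using congrArg η hcube

theorem smul_coeff_eq_of_orthogonal {g : V →ₗ[A] V →ₗ[A] A} {Y : V}
    (hξY : g ξ Y = 0) (hY : g Y Y = 1) {a b a' b' : A}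
    (h : a • ξ + b • Y = a' • ξ + b' • Y) : b = b' := by
  simpa [hξY, hY] using congrArg (fun v => g v Y) h

variable {f : A} {E : V → V} (hE : ∀ X : V, E X = X + ((f - 1) * η X) • ξ)
include hE

theorem apply_eq_self_of_eta_eq_zero {X : V} (hX : η X = 0) : E X = X := by
  rw [hE, hX, mul_zero, zero_smul, add_zero]

theorem apply_xi (hηξ : η ξ = 1) : E ξ = f • ξ := by
  rw [hE, hηξ, mul_one, sub_smul, one_smul, add_sub_cancel]

theorem extCovDeriv_xi {Dv : V → A → A} {nabla : V → V → V}
    (hleib : ∀ (X Y : V) (a : A), nabla X (a • Y) = Dv X a • Y + a • nabla X Y)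
    (hnablaξ : ∀ X : V, nabla X ξ = φ X) (hηξ : η ξ = 1)
    {X : V} (hX : η X = 0) (hφX : η (φ X) = 0) :
    extCovDeriv nabla E X ξ = (Dv X f + (f - 1) * η (nabla ξ X)) • ξ + (f - 1) • φ X := by
  rw [extCovDeriv, apply_xi hE hηξ, hleib, hnablaξ, apply_eq_self_of_eta_eq_zero hE hX,
    apply_eq_self_of_eta_eq_zero hE hφX, hE (nabla ξ X)]
  module

end AlmostContact

open AlmostContact

theorem stmt_7_general
    {A : Type*} [CommRing A] [Algebra ℝ A]
    {V : Type*} [AddCommGroup V] [Module A V]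
    (g : V →ₗ[A] V →ₗ[A] A)
    (Dv : V → A → A)
    (nabla : V → V → V)
    (Xm : V →ₗ[A] V) (ξ : V) (η : V →ₗ[A] A)
    (c : ℝ)
    -- the Levi-Civita connection: additivity, Leibniz rule, metric compatibility
    (hleib : ∀ (X Y : V) (a : A), nabla X (a • Y) = Dv X a • Y + a • nabla X Y)
    -- almost contact metric structure
    (hXm2 : ∀ X : V, Xm (Xm X) = -X + η X • ξ)
    (hgξ : g ξ ξ = 1)
    (hXmξ : Xm ξ = 0)
    (hη : ∀ X : V, η X = g ξ X)
    (hcomp : ∀ X Y : V, g (Xm X) (Xm Y) = g X Y - η X * η Y)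
    -- Sasakian conditions
    (hnablaξ : ∀ X : V, nabla X ξ = Xm X)
    -- a horizontal unit vector field e₁
    (e₁ : V) (he₁ : g e₁ e₁ = 1) (hηe₁ : η e₁ = 0)
    -- the shape operator E = Id + (f−1)η(·)ξ satisfying the Codazzi equation
    (f : A) (E : V → V)
    (hE : ∀ X : V, E X = X + ((f - 1) * η X) • ξ)
    (hCodazzi : ∀ X Y : V,
      (nabla X (E Y) - E (nabla X Y)) - (nabla Y (E X) - E (nabla Y X)) =
        algebraMap ℝ A c •
          (η X • Xm Y - η Y • Xm X - (2 : A) • (g (Xm X) Y • ξ))) :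
    f = algebraMap ℝ A (1 - c) ∧
    (∀ X : V, E X = X - (algebraMap ℝ A c * η X) • ξ) ∧
    g (E e₁) e₁ + g (E (Xm e₁)) (Xm e₁) + g (E ξ) ξ = algebraMap ℝ A (3 - c) := by
  have hηξ : η ξ = 1 := by rw [hη, hgξ]
  have hηXm : η (Xm e₁) = 0 := eta_apply_phi hηξ hXmξ hXm2 e₁
  have hXme₁ : g (Xm e₁) (Xm e₁) = 1 := by rw [hcomp, he₁, hηe₁, mul_zero, sub_zero]
  have hcod := hCodazzi e₁ ξ
  rw [← extCovDeriv, extCovDeriv_xi hE hleib hnablaξ hηξ hηe₁ hηXm, hηe₁, hηξ, hXmξ]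
    at hcod
  have hf : f - 1 = -algebraMap ℝ A c :=
    smul_coeff_eq_of_orthogonal (g := g) (a' := -(2 * algebraMap ℝ A c * g (Xm e₁) ξ))
      (by rw [← hη, hηXm]) hXme₁ (hcod.trans (by module))
  refine ⟨by rw [map_sub, map_one]; linear_combination hf, fun X => ?_, ?_⟩
  · rw [hE, hf, neg_mul, neg_smul, ← sub_eq_add_neg]
  · rw [apply_eq_self_of_eta_eq_zero hE hηe₁, apply_eq_self_of_eta_eq_zero hE hηXm,
      apply_xi hE hηξ, map_smul, LinearMap.smul_apply, hgξ, he₁, hXme₁, map_sub, map_ofNat]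
    linear_combination hf

/-- on a Sasakian 3-manifold immersed in `M_ℂ²(c)` (`c ≠ 0`), if the shape
operator `E = Id + (f−1)η(·)ξ` satisfies the Codazzi equation
`d^∇E(X,Y) = c(η(X)𝔛Y − η(Y)𝔛X − 2g(𝔛X,Y)ξ)`, then `f = 1 − c`; hence
`EX = X − c η(X)ξ` and `tr E = 3 − c`, i.e. the mean curvature `H = (3−c)/3` is constant.
(Algebraic model: `A` = functions, `V` = vector fields; `{e₁, e₂ = 𝔛e₁, ξ}` an
orthonormal frame.) -/
theorem stmt_7
    {A : Type*} [CommRing A] [Algebra ℝ A]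
    {V : Type*} [AddCommGroup V] [Module A V]
    (g : V →ₗ[A] V →ₗ[A] A)
    (Dv : V → A → A)
    (nabla : V → V → V)
    (Xm : V →ₗ[A] V) (ξ : V) (η : V →ₗ[A] A)
    (c : ℝ) (hc : c ≠ 0)
    -- the Levi-Civita connection: additivity, Leibniz rule, metric compatibility
    (hadd : ∀ X Y Z : V, nabla X (Y + Z) = nabla X Y + nabla X Z)
    (hleib : ∀ (X Y : V) (a : A), nabla X (a • Y) = Dv X a • Y + a • nabla X Y)
    (hmetric : ∀ X Y Z : V, Dv X (g Y Z) = g (nabla X Y) Z + g Y (nabla X Z))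
    -- almost contact metric structure
    (hgsym : ∀ X Y : V, g X Y = g Y X)
    (hXm2 : ∀ X : V, Xm (Xm X) = -X + η X • ξ)
    (hgξ : g ξ ξ = 1)
    (hXmξ : Xm ξ = 0)
    (hη : ∀ X : V, η X = g ξ X)
    (hcomp : ∀ X Y : V, g (Xm X) (Xm Y) = g X Y - η X * η Y)
    -- Sasakian conditions
    (hnablaξ : ∀ X : V, nabla X ξ = Xm X)
    (hnablaXm : ∀ X Y : V, nabla X (Xm Y) - Xm (nabla X Y) = η Y • X - g X Y • ξ)
    -- a horizontal unit vector field e₁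
    (e₁ : V) (he₁ : g e₁ e₁ = 1) (hηe₁ : η e₁ = 0)
    -- the shape operator E = Id + (f−1)η(·)ξ satisfying the Codazzi equation
    (f : A) (E : V → V)
    (hE : ∀ X : V, E X = X + ((f - 1) * η X) • ξ)
    (hCodazzi : ∀ X Y : V,
      (nabla X (E Y) - E (nabla X Y)) - (nabla Y (E X) - E (nabla Y X)) =
        algebraMap ℝ A c •
          (η X • Xm Y - η Y • Xm X - (2 : A) • (g (Xm X) Y • ξ))) :
    f = algebraMap ℝ A (1 - c) ∧
    (∀ X : V, E X = X - (algebraMap ℝ A c * η X) • ξ) ∧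
    g (E e₁) e₁ + g (E (Xm e₁)) (Xm e₁) + g (E ξ) ξ = algebraMap ℝ A (3 - c) :=
  stmt_7_general g Dv nabla Xm ξ η c hleib hXm2 hgξ hXmξ hη hcomp hnablaξ e₁ he₁ hηe₁ f E hE
    hCodazzi
end

section
/- With notation as in the 2-dimensional spinor setting (Σ ≅ ℂ², orthonormal basis t₁,t₂, Clifford relations, ω = i t₁•t₂, φ̄ = ω•φ, J the rotation Jt₁ = t₂, Jt₂ = −t₁), let φ ∈ Σ be a unit spinor, f = Re⟨φ, φ̄⟩, and T the vector defined by ⟨T,t₁⟩ = Re⟨i t₂•φ, φ⟩, ⟨T,t₂⟩ = −Re⟨i t₁•φ, φ⟩. Then the spinor θ := iφ − i f φ̄ + JT•φ satisfies |θ|² = 2(1 − f² − ‖T‖²)|φ|², and hence θ = 0 whenever f² + ‖T‖² = 1. -/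
/-!
Regard the spinor module as a real inner product space of dimension 4. Clifford multiplication
by `t₁`, `t₂` and (since they anticommute) by `t₁ t₂` is skew, and `t₁`, `t₂` are isometries, so
`φ, t₁•φ, t₂•φ, t₁•t₂•φ` is a real orthonormal basis. The coefficients of `iφ` in this basis
are `0, T₂, -T₁, -f`; hence `θ = 0`, and Parseval gives `f² + ‖T‖² = ‖iφ‖² = 1`, so both sides
of the norm identity vanish.
-/

open scoped InnerProductSpace ComplexConjugate
open Complex Module

section RealFrame

attribute [local instance] InnerProductSpace.complexToReal

section SkewOperator

variable {E : Type*} [SeminormedAddCommGroup E] [InnerProductSpace ℂ E] {A B : E →ₗ[ℂ] E}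

lemma real_inner_self_apply_eq_zero_of_skew (hA : ∀ x y, ⟪A x, y⟫_ℂ = -⟪x, A y⟫_ℂ) (x : E) :
    ⟪x, A x⟫_ℝ = 0 := by
  have h := inner_re_symm (𝕜 := ℂ) x (A x)
  rw [hA, map_neg] at h
  rw [real_inner_eq_re_inner ℂ]
  linarith

lemma inner_apply_apply_of_skew_of_sq_neg (hA : ∀ x y, ⟪A x, y⟫_ℂ = -⟪x, A y⟫_ℂ)
    (hA2 : ∀ x, A (A x) = -x) (x y : E) : ⟪A x, A y⟫_ℂ = ⟪x, y⟫_ℂ := by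
  rw [hA, hA2, inner_neg_right, neg_neg]

lemma norm_apply_of_skew_of_sq_neg (hA : ∀ x y, ⟪A x, y⟫_ℂ = -⟪x, A y⟫_ℂ)
    (hA2 : ∀ x, A (A x) = -x) (x : E) : ‖A x‖ = ‖x‖ := by
  rw [@norm_eq_sqrt_re_inner ℂ, @norm_eq_sqrt_re_inner ℂ,
    inner_apply_apply_of_skew_of_sq_neg hA hA2]

lemma skew_apply_apply_of_anticomm (hA : ∀ x y, ⟪A x, y⟫_ℂ = -⟪x, A y⟫_ℂ)
    (hB : ∀ x y, ⟪B x, y⟫_ℂ = -⟪x, B y⟫_ℂ) (hAB : ∀ x, A (B x) + B (A x) = 0) (x y : E) :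
    ⟪A (B x), y⟫_ℂ = -⟪x, A (B y)⟫_ℂ := by
  rw [hA, hB, neg_neg, eq_neg_of_add_eq_zero_right (hAB y), inner_neg_right]

lemma re_inner_I_smul_left (x y : E) : (⟪I • x, y⟫_ℂ).re = -⟪x, I • y⟫_ℝ := by
  simp [real_inner_eq_re_inner ℂ, inner_smul_left, inner_smul_right]

lemma re_inner_I_smul_right (x y : E) : (⟪x, I • y⟫_ℂ).re = -⟪y, I • x⟫_ℝ := by
  rw [← inner_conj_symm, conj_re, re_inner_I_smul_left]

end SkewOperator

structure IsSkewCliffordPair {E : Type*} [SeminormedAddCommGroup E] [InnerProductSpace ℂ E]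
    (c₁ c₂ : E →ₗ[ℂ] E) : Prop where
  sq_left : ∀ ψ, c₁ (c₁ ψ) = -ψ
  sq_right : ∀ ψ, c₂ (c₂ ψ) = -ψ
  anticomm : ∀ ψ, c₁ (c₂ ψ) + c₂ (c₁ ψ) = 0
  skew_left : ∀ ψ χ, ⟪c₁ ψ, χ⟫_ℂ = -⟪ψ, c₁ χ⟫_ℂ
  skew_right : ∀ ψ χ, ⟪c₂ ψ, χ⟫_ℂ = -⟪ψ, c₂ χ⟫_ℂ

def cliffordFrame {E : Type*} (c₁ c₂ : E → E) (φ : E) : Fin 4 → E :=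
  ![φ, c₁ φ, c₂ φ, c₁ (c₂ φ)]

namespace IsSkewCliffordPair

variable {E : Type*} [NormedAddCommGroup E] [InnerProductSpace ℂ E] {c₁ c₂ : E →ₗ[ℂ] E}

lemma orthonormal_cliffordFrame (hc : IsSkewCliffordPair c₁ c₂) {φ : E} (hφ : ‖φ‖ = 1) :
    Orthonormal ℝ (cliffordFrame c₁ c₂ φ) := by
  have iso₁ := inner_apply_apply_of_skew_of_sq_neg hc.skew_left hc.sq_left
  have iso₂ := inner_apply_apply_of_skew_of_sq_neg hc.skew_right hc.sq_right
  have h₀₁ := real_inner_self_apply_eq_zero_of_skew hc.skew_left φ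
  have h₀₂ := real_inner_self_apply_eq_zero_of_skew hc.skew_right φ
  have h₀₃ : ⟪φ, c₁ (c₂ φ)⟫_ℝ = 0 :=
    real_inner_self_apply_eq_zero_of_skew (A := c₁ ∘ₗ c₂)
      (skew_apply_apply_of_anticomm hc.skew_left hc.skew_right hc.anticomm) φ
  have h₁₂ : ⟪c₁ φ, c₂ φ⟫_ℝ = 0 := by
    rw [real_inner_eq_re_inner ℂ, hc.skew_left, map_neg, ← real_inner_eq_re_inner ℂ, h₀₃,
      neg_zero]
  have h₁₃ : ⟪c₁ φ, c₁ (c₂ φ)⟫_ℝ = 0 := by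
    rw [real_inner_eq_re_inner ℂ, iso₁, ← real_inner_eq_re_inner ℂ, h₀₂]
  have h₂₃ : ⟪c₂ φ, c₁ (c₂ φ)⟫_ℝ = 0 := by
    rw [real_inner_eq_re_inner ℂ, eq_neg_of_add_eq_zero_left (hc.anticomm φ), inner_neg_right,
      iso₂, map_neg, ← real_inner_eq_re_inner ℂ, h₀₁, neg_zero]
  have n₁ : ‖c₁ φ‖ = 1 := by rw [norm_apply_of_skew_of_sq_neg hc.skew_left hc.sq_left, hφ]
  have n₂ : ‖c₂ φ‖ = 1 := by rw [norm_apply_of_skew_of_sq_neg hc.skew_right hc.sq_right, hφ]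
  have n₁₂ : ‖c₁ (c₂ φ)‖ = 1 := by rw [norm_apply_of_skew_of_sq_neg hc.skew_left hc.sq_left, n₂]
  rw [orthonormal_iff_ite]
  intro i j
  fin_cases i <;> fin_cases j <;>
    simp [cliffordFrame, real_inner_comm, hφ, n₁, n₂, n₁₂, h₀₁, h₀₂, h₀₃, h₁₂, h₁₃, h₂₃]

noncomputable def cliffordFrameBasis (hc : IsSkewCliffordPair c₁ c₂) {φ : E} (hφ : ‖φ‖ = 1)
    (hdim : finrank ℂ E = 2) : OrthonormalBasis (Fin 4) ℝ E :=
  (basisOfOrthonormalOfCardEqFinrank (hc.orthonormal_cliffordFrame hφ)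
      (by rw [finrank_real_of_complex, hdim, Fintype.card_fin])).toOrthonormalBasis
    (by simpa using hc.orthonormal_cliffordFrame hφ)

lemma coe_cliffordFrameBasis (hc : IsSkewCliffordPair c₁ c₂) {φ : E} (hφ : ‖φ‖ = 1)
    (hdim : finrank ℂ E = 2) : ⇑(hc.cliffordFrameBasis hφ hdim) = cliffordFrame c₁ c₂ φ := by
  simp [cliffordFrameBasis]

lemma I_smul_eq (hc : IsSkewCliffordPair c₁ c₂) {φ : E} (hφ : ‖φ‖ = 1)
    (hdim : finrank ℂ E = 2) :
    I • φ = ⟪c₁ φ, I • φ⟫_ℝ • c₁ φ + ⟪c₂ φ, I • φ⟫_ℝ • c₂ φ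
      + ⟪c₁ (c₂ φ), I • φ⟫_ℝ • c₁ (c₂ φ) := by
  have h := (hc.cliffordFrameBasis hφ hdim).sum_repr' (I • φ)
  rw [coe_cliffordFrameBasis, Fin.sum_univ_four] at h
  have h₀ : ⟪φ, I • φ⟫_ℝ = 0 := real_inner_I_smul_self ℂ φ
  simpa [cliffordFrame, h₀, add_assoc] using h.symm

lemma sum_sq_real_inner_I_smul (hc : IsSkewCliffordPair c₁ c₂) {φ : E} (hφ : ‖φ‖ = 1)
    (hdim : finrank ℂ E = 2) :
    ⟪c₁ φ, I • φ⟫_ℝ ^ 2 + ⟪c₂ φ, I • φ⟫_ℝ ^ 2 + ⟪c₁ (c₂ φ), I • φ⟫_ℝ ^ 2 = 1 := by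
  have h := (hc.cliffordFrameBasis hφ hdim).sum_sq_inner_right (I • φ)
  rw [coe_cliffordFrameBasis, Fin.sum_univ_four] at h
  have h₀ : ⟪φ, I • φ⟫_ℝ = 0 := real_inner_I_smul_self ℂ φ
  simpa [cliffordFrame, h₀, norm_smul, hφ, add_assoc] using h

end IsSkewCliffordPair

end RealFrame

theorem stmt_12_general
    {S : Type*} [NormedAddCommGroup S] [InnerProductSpace ℂ S]
    (hdim : Module.finrank ℂ S = 2)
    (c1 c2 : S →ₗ[ℂ] S)
    (h11 : ∀ ψ, c1 (c1 ψ) = -ψ) (h22 : ∀ ψ, c2 (c2 ψ) = -ψ)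
    (h12 : ∀ ψ, c1 (c2 ψ) + c2 (c1 ψ) = 0)
    (hskew1 : ∀ ψ χ : S, (inner ℂ (c1 ψ) χ : ℂ) = -(inner ℂ ψ (c1 χ) : ℂ))
    (hskew2 : ∀ ψ χ : S, (inner ℂ (c2 ψ) χ : ℂ) = -(inner ℂ ψ (c2 χ) : ℂ))
    (φ : S) (hφ : ‖φ‖ = 1)
    (f T1 T2 : ℝ)
    (hf : f = (inner ℂ φ (Complex.I • c1 (c2 φ)) : ℂ).re)
    (hT1 : T1 = (inner ℂ (Complex.I • c2 φ) φ : ℂ).re)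
    (hT2 : T2 = -(inner ℂ (Complex.I • c1 φ) φ : ℂ).re)
    (θ : S)
    (hθ : θ = Complex.I • φ - (Complex.I * (f : ℂ)) • (Complex.I • c1 (c2 φ))
      + (T1 • c2 φ - T2 • c1 φ)) :
    ‖θ‖ ^ 2 = 2 * (1 - f ^ 2 - (T1 ^ 2 + T2 ^ 2)) * ‖φ‖ ^ 2 ∧
    (f ^ 2 + (T1 ^ 2 + T2 ^ 2) = 1 → θ = 0) := by
  have hc : IsSkewCliffordPair c1 c2 := ⟨h11, h22, h12, hskew1, hskew2⟩
  rw [re_inner_I_smul_right] at hf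
  rw [re_inner_I_smul_left] at hT1 hT2
  have hθ0 : θ = 0 := by
    rw [hθ, hc.I_smul_eq hφ hdim, hf, hT1, hT2, smul_smul, mul_right_comm, I_mul_I]
    module
  have hsphere : f ^ 2 + (T1 ^ 2 + T2 ^ 2) = 1 := by
    rw [hf, hT1, hT2, neg_sq, neg_sq, neg_neg]
    linarith [hc.sum_sq_real_inner_I_smul hφ hdim]
  exact ⟨by rw [hθ0, sub_sub, hsphere]; simp, fun _ => hθ0⟩

/-- in the 2-dimensional spinor setting, for a unit spinor `φ`, with
`f = Re⟨φ, φ̄⟩`, `T` defined by `⟨T,t₁⟩ = Re⟨i t₂•φ, φ⟩`, `⟨T,t₂⟩ = −Re⟨i t₁•φ, φ⟩`,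
and `J` the rotation `Jt₁ = t₂, Jt₂ = −t₁` (so `JT•φ = T₁ t₂•φ − T₂ t₁•φ`), the spinor
`θ := iφ − i f φ̄ + JT•φ` satisfies `|θ|² = 2(1 − f² − ‖T‖²)|φ|²`; hence `θ = 0`
whenever `f² + ‖T‖² = 1`. -/
theorem stmt_12
    {S : Type*} [NormedAddCommGroup S] [InnerProductSpace ℂ S]
    [FiniteDimensional ℂ S] (hdim : Module.finrank ℂ S = 2)
    (c1 c2 : S →ₗ[ℂ] S)
    (h11 : ∀ ψ, c1 (c1 ψ) = -ψ) (h22 : ∀ ψ, c2 (c2 ψ) = -ψ)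
    (h12 : ∀ ψ, c1 (c2 ψ) + c2 (c1 ψ) = 0)
    (hskew1 : ∀ ψ χ : S, (inner ℂ (c1 ψ) χ : ℂ) = -(inner ℂ ψ (c1 χ) : ℂ))
    (hskew2 : ∀ ψ χ : S, (inner ℂ (c2 ψ) χ : ℂ) = -(inner ℂ ψ (c2 χ) : ℂ))
    (φ : S) (hφ : ‖φ‖ = 1)
    (f T1 T2 : ℝ)
    (hf : f = (inner ℂ φ (Complex.I • c1 (c2 φ)) : ℂ).re)
    (hT1 : T1 = (inner ℂ (Complex.I • c2 φ) φ : ℂ).re)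
    (hT2 : T2 = -(inner ℂ (Complex.I • c1 φ) φ : ℂ).re)
    (θ : S)
    (hθ : θ = Complex.I • φ - (Complex.I * (f : ℂ)) • (Complex.I • c1 (c2 φ))
      + (T1 • c2 φ - T2 • c1 φ)) :
    ‖θ‖ ^ 2 = 2 * (1 - f ^ 2 - (T1 ^ 2 + T2 ^ 2)) * ‖φ‖ ^ 2 ∧
    (f ^ 2 + (T1 ^ 2 + T2 ^ 2) = 1 → θ = 0) :=
  stmt_12_general hdim c1 c2 h11 h22 h12 hskew1 hskew2 φ hφ f T1 T2 hf hT1 hT2 θ hθ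
end

section
/- Let D be the Dirac operator of a Spin^c surface and suppose φ is a spinor field satisfying ∇_X φ = −(1/2) E X • φ + (iτ/2) X • φ̄ for all tangent vectors X, where E is a field of symmetric endomorphisms with trace 2H. Then D φ = H φ − i τ φ̄ and |φ| is constant. -/
/-!
Contracting the equation with the frame, `eᵢ • eᵢ = -1` gives `∑ eᵢ • eᵢ • φ̄ = -2 φ̄`, and
`∑ eᵢ • E eᵢ • φ = -(tr E) φ = -2H φ` because the off-diagonal terms `E₀₁ e₀ e₁ + E₁₀ e₁ e₀`
cancel for symmetric `E`. For the norm, in dimension two the Clifford product `X • e₀ • e₁` of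
three vectors is Clifford multiplication by the single vector `⟨X, e₁⟩ e₀ - ⟨X, e₀⟩ e₁`, so
`∇_X φ = Z • φ` for some vector `Z`, and `Re⟨Z • φ, φ⟩ = 0` since `Z •` is skew-Hermitian.
-/

section CliffordRelations

variable {S : Type*} [AddCommGroup S] [Module ℂ S] {V : Type*} [AddCommGroup V] [Module ℝ V]
  {g : V →ₗ[ℝ] V →ₗ[ℝ] ℝ} {cl : V →ₗ[ℝ] S →ₗ[ℂ] S}

theorem cl_cl_self_of_eq_one
    (hclif : ∀ (X Y : V) (ψ : S), cl X (cl Y ψ) + cl Y (cl X ψ) = (-2 * g X Y) • ψ)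
    {X : V} (hX : g X X = 1) (ψ : S) : cl X (cl X ψ) = -ψ := by
  have h := hclif X X ψ
  rw [hX, ← two_smul ℝ] at h
  refine smul_right_injective S (two_ne_zero (α := ℝ)) ?_
  simp only [h, smul_neg]
  norm_num

theorem cl_cl_swap_of_eq_zero
    (hclif : ∀ (X Y : V) (ψ : S), cl X (cl Y ψ) + cl Y (cl X ψ) = (-2 * g X Y) • ψ)
    {X Y : V} (hXY : g X Y = 0) (ψ : S) : cl Y (cl X ψ) = -cl X (cl Y ψ) := by
  have h := hclif X Y ψ
  rw [hXY, mul_zero, zero_smul] at h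
  exact eq_neg_of_add_eq_zero_right h

end CliffordRelations

theorem re_inner_cl_self_eq_zero {S : Type*} [NormedAddCommGroup S] [InnerProductSpace ℂ S]
    {V : Type*} (cl : V → S → S)
    (hskew : ∀ (X : V) (ψ χ : S), (inner ℂ (cl X ψ) χ : ℂ) = -(inner ℂ ψ (cl X χ) : ℂ))
    (X : V) (ψ : S) : (inner ℂ (cl X ψ) ψ : ℂ).re = 0 := by
  have h := congrArg Complex.re (hskew X ψ ψ)
  rw [Complex.neg_re, ← inner_conj_symm ψ, Complex.conj_re] at h
  linarith

section OrthonormalFrame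

variable {S : Type*} [AddCommGroup S] [Module ℂ S] {V : Type*} [AddCommGroup V] [Module ℝ V]
  {g : V →ₗ[ℝ] V →ₗ[ℝ] ℝ} {e : Fin 2 → V} {cl : V →ₗ[ℝ] S →ₗ[ℂ] S}

theorem cl_eq_of_frame (hbasis : ∀ v : V, v = g v (e 0) • e 0 + g v (e 1) • e 1)
    (X : V) (ψ : S) : cl X ψ = g X (e 0) • cl (e 0) ψ + g X (e 1) • cl (e 1) ψ := by
  conv_lhs => rw [hbasis X]
  simp only [map_add, map_smul, LinearMap.add_apply, LinearMap.smul_apply]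

theorem cl_frame_cl_frame_self
    (hclif : ∀ (X Y : V) (ψ : S), cl X (cl Y ψ) + cl Y (cl X ψ) = (-2 * g X Y) • ψ)
    (horth : ∀ i j, g (e i) (e j) = if i = j then 1 else 0) (i : Fin 2) (ψ : S) :
    cl (e i) (cl (e i) ψ) = -ψ :=
  cl_cl_self_of_eq_one hclif (by simpa using horth i i) ψ

theorem sum_cl_frame_cl_frame
    (hclif : ∀ (X Y : V) (ψ : S), cl X (cl Y ψ) + cl Y (cl X ψ) = (-2 * g X Y) • ψ)
    (horth : ∀ i j, g (e i) (e j) = if i = j then 1 else 0) (ψ : S) :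
    ∑ i, cl (e i) (cl (e i) ψ) = (-2 : ℂ) • ψ := by
  rw [Fin.sum_univ_two, cl_frame_cl_frame_self hclif horth, cl_frame_cl_frame_self hclif horth]
  module

theorem cl_cl_frame_cl_frame
    (hclif : ∀ (X Y : V) (ψ : S), cl X (cl Y ψ) + cl Y (cl X ψ) = (-2 * g X Y) • ψ)
    (horth : ∀ i j, g (e i) (e j) = if i = j then 1 else 0)
    (hbasis : ∀ v : V, v = g v (e 0) • e 0 + g v (e 1) • e 1) (X : V) (ψ : S) :
    cl X (cl (e 0) (cl (e 1) ψ)) = cl (g X (e 1) • e 0 - g X (e 0) • e 1) ψ := by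
  have h00 : cl (e 0) (cl (e 0) (cl (e 1) ψ)) = -cl (e 1) ψ :=
    cl_frame_cl_frame_self hclif horth 0 _
  have h10 : cl (e 1) (cl (e 0) (cl (e 1) ψ)) = cl (e 0) ψ := by
    rw [cl_cl_swap_of_eq_zero hclif (by simpa using horth 0 1),
      cl_frame_cl_frame_self hclif horth 1, map_neg, neg_neg]
  rw [cl_eq_of_frame hbasis X, h00, h10, map_sub, map_smul, map_smul, LinearMap.sub_apply,
    LinearMap.smul_apply, LinearMap.smul_apply]
  module

theorem sum_cl_frame_cl_apply_frame
    (hclif : ∀ (X Y : V) (ψ : S), cl X (cl Y ψ) + cl Y (cl X ψ) = (-2 * g X Y) • ψ)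
    (horth : ∀ i j, g (e i) (e j) = if i = j then 1 else 0)
    (hbasis : ∀ v : V, v = g v (e 0) • e 0 + g v (e 1) • e 1)
    (E : V →ₗ[ℝ] V) (hEsym : ∀ X Y : V, g (E X) Y = g X (E Y)) (ψ : S) :
    ∑ i, cl (e i) (cl (E (e i)) ψ) = -(g (E (e 0)) (e 0) + g (E (e 1)) (e 1)) • ψ := by
  have g00 : g (e 0) (e 0) = 1 := by simpa using horth 0 0
  have g01 : g (e 0) (e 1) = 0 := by simpa using horth 0 1
  have hsymm : g (E (e 0)) (e 1) = g (E (e 1)) (e 0) := by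
    rw [hEsym]
    conv_lhs => rw [hbasis (E (e 1))]
    simp [g00, g01]
  rw [Fin.sum_univ_two, cl_eq_of_frame hbasis (E (e 0)), cl_eq_of_frame hbasis (E (e 1))]
  simp only [map_add, LinearMap.map_smul_of_tower, cl_frame_cl_frame_self hclif horth,
    cl_cl_swap_of_eq_zero hclif g01, hsymm]
  module

end OrthonormalFrame

/-- on a Spin^c surface, if `∇_X φ = −(1/2) EX•φ + (iτ/2) X•φ̄` with `E`
symmetric of trace `2H`, then `Dφ = Hφ − iτφ̄` and `|φ|` is constant
(i.e. `X(|φ|²) = 2 Re⟨∇_X φ, φ⟩ = 0` for all `X`).  Pointwise algebraic model: `V` is the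
tangent space with orthonormal frame `e₀, e₁`, `cl` the Clifford multiplication on the
spinor module `S`, and `φ̄ = i e₀•e₁•φ`. -/
theorem stmt_13
    {S : Type*} [NormedAddCommGroup S] [InnerProductSpace ℂ S]
    {V : Type*} [AddCommGroup V] [Module ℝ V]
    (g : V →ₗ[ℝ] V →ₗ[ℝ] ℝ)
    (e : Fin 2 → V)
    (horth : ∀ i j, g (e i) (e j) = if i = j then 1 else 0)
    (hbasis : ∀ v : V, v = g v (e 0) • e 0 + g v (e 1) • e 1)
    (cl : V →ₗ[ℝ] S →ₗ[ℂ] S)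
    (hclif : ∀ (X Y : V) (ψ : S), cl X (cl Y ψ) + cl Y (cl X ψ) = (-2 * g X Y) • ψ)
    (hskew : ∀ (X : V) (ψ χ : S), (inner ℂ (cl X ψ) χ : ℂ) = -(inner ℂ ψ (cl X χ) : ℂ))
    (nabla : V → S →ₗ[ℝ] S)
    (E : V →ₗ[ℝ] V) (hEsym : ∀ X Y : V, g (E X) Y = g X (E Y))
    (H τ : ℝ)
    (htrace : g (E (e 0)) (e 0) + g (E (e 1)) (e 1) = 2 * H)
    (conjS : S → S)
    (hconjS : ∀ ψ, conjS ψ = Complex.I • cl (e 0) (cl (e 1) ψ))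
    (φ : S)
    (hspinor : ∀ X : V, nabla X φ =
      (-(1 / 2 : ℝ)) • cl (E X) φ + ((Complex.I * (τ : ℂ)) / 2) • cl X (conjS φ)) :
    (∑ i, cl (e i) (nabla (e i) φ)) = H • φ - (Complex.I * (τ : ℂ)) • conjS φ ∧
    ∀ X : V, (inner ℂ (nabla X φ) φ : ℂ).re = 0 := by
  constructor
  · simp only [hspinor, map_add, LinearMap.map_smul_of_tower, map_smul, Finset.sum_add_distrib,
      ← Finset.smul_sum, sum_cl_frame_cl_apply_frame hclif horth hbasis E hEsym, htrace,
      sum_cl_frame_cl_frame hclif horth]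
    match_scalars <;> simp
  · intro X
    have hvector : nabla X φ =
        cl ((-(1 / 2 : ℝ)) • E X - (τ / 2) • (g X (e 1) • e 0 - g X (e 0) • e 1)) φ := by
      rw [hspinor, hconjS, map_smul, cl_cl_frame_cl_frame hclif horth hbasis, smul_smul]
      simp only [map_sub, map_smul, LinearMap.sub_apply, LinearMap.smul_apply]
      match_scalars <;> simp [Complex.ext_iff]
    rw [hvector]
    exact re_inner_cl_self_eq_zero (fun X => cl X) hskew _ φ
end

section
/- Let (M³,g) be Spin^c with a unit-norm spinor φ satisfying ∇_X φ = −(1/2) EX•φ (E symmetric) and ξ•φ = −iφ for a unit vector field ξ. Then ∇_X ξ = 𝔛(EX) for all X, where 𝔛 is the endomorphism determined by e₁ ↦ e₂, e₂ ↦ −e₁, ξ ↦ 0 in an orthonormal frame {e₁, e₂ = 𝔛e₁, ξ} with −i e₂•φ = e₁•φ. -/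
/-- on a Spin^c 3-manifold with unit-norm spinor `φ` satisfying
`∇_X φ = −(1/2) EX•φ` (`E` symmetric) and `ξ•φ = −iφ` for the unit vector field
`ξ = e₂` (0-indexed: `e 2`), one has `∇_X ξ = 𝔛(EX)` for all `X`, where `𝔛` maps
`e₁ ↦ e₂, e₂ ↦ −e₁, ξ ↦ 0` and `−i e₂•φ = e₁•φ`.  The orthonormality of the frame
`{φ, e₁•φ, e₂•φ, ξ•φ}` for `|φ| = 1` is encoded by the injectivity of `v ↦ v•φ`. -/
theorem stmt_18
    {S : Type*} [NormedAddCommGroup S] [InnerProductSpace ℂ S]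
    {V : Type*} [AddCommGroup V] [Module ℝ V]
    (g : V →ₗ[ℝ] V →ₗ[ℝ] ℝ)
    (e : Fin 3 → V)
    (horth : ∀ i j, g (e i) (e j) = if i = j then 1 else 0)
    (hspan : ∀ v : V, ∃ x y z : ℝ, v = x • e 0 + y • e 1 + z • e 2)
    (cl : V →ₗ[ℝ] S →ₗ[ℂ] S)
    (hclif : ∀ (X Y : V) (ψ : S), cl X (cl Y ψ) + cl Y (cl X ψ) = (-2 * g X Y) • ψ)
    (nablaV : V → V → V)
    (nabla : V → S →ₗ[ℂ] S)
    (hcompat : ∀ (X Y : V) (ψ : S),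
      nabla X (cl Y ψ) = cl (nablaV X Y) ψ + cl Y (nabla X ψ))
    (Xm : V →ₗ[ℝ] V)
    (hXm0 : Xm (e 0) = e 1) (hXm1 : Xm (e 1) = -e 0) (hXm2 : Xm (e 2) = 0)
    (E : V → V)
    (hEsym : ∀ X Y : V, g (E X) Y = g X (E Y))
    (φ : S) (hφ : ‖φ‖ = 1)
    (hinj : Function.Injective fun v : V => cl v φ)
    (hspinor : ∀ X : V, nabla X φ = (-(1 / 2 : ℝ)) • cl (E X) φ)
    (hxi : cl (e 2) φ = (-Complex.I) • φ)
    (h12φ : (-Complex.I) • cl (e 1) φ = cl (e 0) φ) :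
    ∀ X : V, nablaV X (e 2) = Xm (E X) := by
  -- anticommutation for orthogonal basis vectors
  have hanti : ∀ i j : Fin 3, i ≠ j → cl (e i) (cl (e j) φ) = - cl (e j) (cl (e i) φ) := by
    intro i j hij
    have h := hclif (e i) (e j) φ
    rw [horth i j, if_neg hij] at h
    have h0 : cl (e i) (cl (e j) φ) + cl (e j) (cl (e i) φ) = 0 := by
      rw [h]; simp
    linear_combination (norm := module) h0
  have h1φ : cl (e 1) φ = Complex.I • cl (e 0) φ := by
    rw [← h12φ, smul_smul]
    simp
  -- action of ξ = e 2 on the frame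
  have hc20 : cl (e 2) (cl (e 0) φ) = Complex.I • cl (e 0) φ := by
    rw [hanti 2 0 (by decide), hxi, map_smul]
    module
  have hc21 : cl (e 2) (cl (e 1) φ) = - cl (e 0) φ := by
    rw [h1φ, map_smul, hc20, smul_smul, Complex.I_mul_I]
    module
  have hc22 : cl (e 2) (cl (e 2) φ) = - φ := by
    rw [hxi, map_smul, hxi, smul_smul]
    have : -Complex.I * -Complex.I = -1 := by
      simpa using Complex.I_mul_I
    rw [this]
    module
  -- basis cases of the key identity
  have b0 : Complex.I • cl (e 0) φ + cl (e 2) (cl (e 0) φ) = (2 : ℝ) • cl (Xm (e 0)) φ := by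
    rw [hc20, hXm0, h1φ]
    module
  have b1 : Complex.I • cl (e 1) φ + cl (e 2) (cl (e 1) φ) = (2 : ℝ) • cl (Xm (e 1)) φ := by
    rw [hc21, hXm1, h1φ, smul_smul, Complex.I_mul_I, map_neg, LinearMap.neg_apply]
    module
  have b2 : Complex.I • cl (e 2) φ + cl (e 2) (cl (e 2) φ) = (2 : ℝ) • cl (Xm (e 2)) φ := by
    rw [hc22, hXm2, map_zero, hxi, smul_smul, LinearMap.zero_apply]
    have : Complex.I * -Complex.I = 1 := by
      simpa using Complex.I_mul_I
    rw [this]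
    module
  -- key identity for all v
  have key : ∀ v : V, Complex.I • cl v φ + cl (e 2) (cl v φ) = (2 : ℝ) • cl (Xm v) φ := by
    intro v
    obtain ⟨x, y, z, rfl⟩ := hspan v
    simp only [map_add, map_smul, LinearMap.map_smul_of_tower, LinearMap.add_apply,
      LinearMap.smul_apply, hc20, hc21, hc22, hXm0, hXm1, hXm2, h1φ, hxi, map_neg,
      map_zero, LinearMap.neg_apply, LinearMap.zero_apply]
    match_scalars <;> push_cast <;> ring_nf <;> simp [Complex.I_sq] <;> ring
  intro X
  set A := cl (E X) φ with hA
  -- main computation from compatibility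
  have hc := hcompat X (e 2) φ
  rw [hxi, map_smul, hspinor X, LinearMap.map_smul_of_tower, ← hA] at hc
  have h2 : cl (nablaV X (e 2)) φ =
      (-Complex.I) • ((-(1 / 2 : ℝ)) • A) - (-(1 / 2 : ℝ)) • cl (e 2) A :=
    eq_sub_of_add_eq hc.symm
  have h3 : cl (nablaV X (e 2)) φ = (1 / 2 : ℝ) • (Complex.I • A + cl (e 2) A) := by
    rw [h2]; match_scalars <;> push_cast <;> ring
  rw [key (E X), smul_smul] at h3
  apply hinj
  simpa using h3
end
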